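/- arXiv:1203.6055 — 2 statements merged into one kernel-verified Lean document; each statement's English description precedes it below -/
import Mathlib

section
/- For every natural number s ≥ 1 and every p ≥ 1, the following identity of bivariate polynomials holds: F_{(2p-1)s}(x,y) = F_s(x,y) · ( Σ_{k=0}^{p-1} (-y)^{sk} L_{2(p-k-1)s}(x,y) − (-y)^{s(p-1)} ). -/
/-!
The key identity is `F_s · L_{n+s} = F_{n+2s} − (−y)^s F_n`, obtained from the addition formula
for `F`, the expression `L_{n+1} = F_{n+2} + y F_n` and d'Ocagne's identity. Taking `n = (2p+1)s`
gives `F_{(2p+3)s} = F_s L_{(2p+2)s} + (−y)^s F_{(2p+1)s}`, and unrolling this recursion in `p`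
produces the sum.
-/

/-- Bivariate Fibonacci polynomials. -/
def bF {R : Type*} [CommRing R] (x y : R) : ℕ → R
  | 0 => 0
  | 1 => 1
  | n + 2 => x * bF x y (n + 1) + y * bF x y n

/-- Bivariate Lucas polynomials. -/
def bL {R : Type*} [CommRing R] (x y : R) : ℕ → R
  | 0 => 2
  | 1 => x
  | n + 2 => x * bL x y (n + 1) + y * bL x y n

open Finset

section

variable {R : Type*} [CommRing R] (x y : R)

theorem bF_add_two (n : ℕ) : bF x y (n + 2) = x * bF x y (n + 1) + y * bF x y n := rfl

theorem bL_add_two (n : ℕ) : bL x y (n + 2) = x * bL x y (n + 1) + y * bL x y n := rfl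

theorem bF_add_add_one (m n : ℕ) :
    bF x y (m + n + 1) = bF x y (m + 1) * bF x y (n + 1) + y * (bF x y m * bF x y n) := by
  induction m using Nat.twoStepInduction generalizing n with
  | zero => simp [bF]
  | one => simp [add_comm 1 n, bF_add_two, bF]
  | more m ih₀ ih₁ =>
    rw [show m + 2 + n + 1 = (m + n + 1) + 2 by omega, bF_add_two,
      show m + n + 1 + 1 = (m + 1) + n + 1 by omega]
    linear_combination x * ih₁ n + y * ih₀ n - bF x y (n + 1) * bF_add_two x y (m + 1) -
      y * bF x y n * bF_add_two x y m

theorem bF_docagne (a c : ℕ) :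
    bF x y (a + 1) * bF x y (a + c) - bF x y a * bF x y (a + c + 1) = (-y) ^ a * bF x y c := by
  induction a with
  | zero => simp [bF]
  | succ a ih =>
    rw [show a + 1 + c = a + c + 1 by omega, bF_add_two x y (a + c), bF_add_two x y a]
    linear_combination (-y) * ih

theorem bL_add_one (n : ℕ) : bL x y (n + 1) = bF x y (n + 2) + y * bF x y n := by
  induction n using Nat.twoStepInduction with
  | zero => simp [bF, bL]
  | one => simp only [bL, bF, mul_one, mul_zero, add_zero]; ring
  | more n ih₀ ih₁ =>
    rw [bL_add_two, ih₁, ih₀, bF_add_two x y (n + 2), bF_add_two x y n]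
    ring

theorem bF_mul_bL_add (s n : ℕ) :
    bF x y s * bL x y (n + s) = bF x y (n + 2 * s) - (-y) ^ s * bF x y n := by
  cases s with
  | zero => simp [bF]
  | succ a =>
    have hadd := bF_add_add_one x y a (n + a + 1)
    rw [show a + (n + a + 1) + 1 = n + 2 * (a + 1) by ring] at hadd
    have hdoc := bF_docagne x y a n
    rw [add_comm a n] at hdoc
    rw [← add_assoc, bL_add_one, hadd, pow_succ]
    linear_combination y * hdoc

theorem bF_two_mul_add_one_mul (s p : ℕ) :
    bF x y ((2 * p + 1) * s) =
      bF x y s * ((∑ k ∈ range (p + 1), (-y) ^ (s * k) * bL x y (2 * (p - k) * s)) -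
        (-y) ^ (s * p)) := by
  induction p with
  | zero => simp only [mul_zero, zero_add, one_mul, range_one, zero_tsub, zero_mul, bL,
      sum_singleton, pow_zero]; ring
  | succ p ih =>
    have hstep := bF_mul_bL_add x y s ((2 * p + 1) * s)
    rw [show (2 * p + 1) * s + s = 2 * (p + 1) * s by ring,
      show (2 * p + 1) * s + 2 * s = (2 * (p + 1) + 1) * s by ring] at hstep
    have hshift : ∑ k ∈ range (p + 1), (-y) ^ (s * (k + 1)) * bL x y (2 * (p + 1 - (k + 1)) * s) =
        (-y) ^ s * ∑ k ∈ range (p + 1), (-y) ^ (s * k) * bL x y (2 * (p - k) * s) := by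
      rw [mul_sum]
      refine sum_congr rfl fun k _ => ?_
      rw [Nat.add_sub_add_right, mul_add_one, pow_add]
      ring
    rw [sum_range_succ', hshift, mul_add_one s p, pow_add]
    simp only [mul_zero, pow_zero, one_mul, Nat.sub_zero]
    linear_combination (-1 : R) * hstep + (-y) ^ s * ih

end

theorem fib_odd_multiple_over_fib_general {R : Type*} [CommRing R] (x y : R)
    (s p : ℕ) (hp : 1 ≤ p) :
    bF x y ((2 * p - 1) * s) =
      bF x y s *
        ((∑ k ∈ Finset.range p, (-y) ^ (s * k) * bL x y (2 * (p - k - 1) * s)) -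
          (-y) ^ (s * (p - 1))) := by
  obtain ⟨q, rfl⟩ : ∃ q, p = q + 1 := ⟨p - 1, by omega⟩
  simp only [Nat.add_sub_cancel, Nat.sub_right_comm _ _ 1,
    show 2 * (q + 1) - 1 = 2 * q + 1 by omega]
  exact bF_two_mul_add_one_mul x y s q

/-- F_{(2p-1)s} = F_s · ( Σ_{k=0}^{p-1} (-y)^{sk} L_{2(p-k-1)s} − (-y)^{s(p-1)} ). -/
theorem fib_odd_multiple_over_fib {R : Type*} [CommRing R] (x y : R)
    (s p : ℕ) (hs : 1 ≤ s) (hp : 1 ≤ p) :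
    bF x y ((2 * p - 1) * s) =
      bF x y s *
        ((∑ k ∈ Finset.range p, (-y) ^ (s * k) * bL x y (2 * (p - k - 1) * s)) -
          (-y) ^ (s * (p - 1))) :=
  fib_odd_multiple_over_fib_general x y s p hp
end

section
/- For all natural numbers s ≥ 1 and p ≥ 0, F_{ps}(x,y) = F_s(x,y) · F_p(L_s(x,y), −(−y)^s), i.e., the quotient F_{ps}/F_s equals the bivariate Fibonacci polynomial F_p evaluated at the pair (L_s(x,y), −(−y)^s). -/
section Recurrence

variable {R : Type*} [CommRing R] {x y : R} {u : ℕ → R}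

theorem eq_mul_bF_of_rec (hu : ∀ n, u (n + 2) = x * u (n + 1) + y * u n) (h0 : u 0 = 0) :
    ∀ n, u n = u 1 * bF x y n
  | 0 => by simp [h0, bF]
  | 1 => by simp [bF]
  | n + 2 => by
    rw [hu, eq_mul_bF_of_rec hu h0 (n + 1), eq_mul_bF_of_rec hu h0 n, bF]
    ring

theorem bL_mul_add_eq_of_rec (hu : ∀ n, u (n + 2) = x * u (n + 1) + y * u n) :
    ∀ s n, bL x y s * u (n + s) = u (n + 2 * s) + (-y) ^ s * u n
  | 0, n => by simp only [bL, add_zero, mul_zero, pow_zero]; ring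
  | 1, n => by simp [bL, hu]
  | s + 2, n => by
    have h₁ := bL_mul_add_eq_of_rec hu (s + 1) (n + 1)
    have h₀ := bL_mul_add_eq_of_rec hu s (n + 2)
    rw [show n + 1 + (s + 1) = n + (s + 2) by omega,
      show n + 1 + 2 * (s + 1) = n + 2 * s + 2 + 1 by omega] at h₁
    rw [show n + 2 + s = n + (s + 2) by omega,
      show n + 2 + 2 * s = n + 2 * s + 2 by omega, hu n] at h₀
    rw [show n + 2 * (s + 2) = n + 2 * s + 2 + 2 by omega, hu (n + 2 * s + 2), bL]
    linear_combination x * h₁ + y * h₀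

end Recurrence

theorem fib_multiple_eq_fib_of_lucas_general {R : Type*} [CommRing R] (x y : R)
    (s p : ℕ) :
    bF x y (p * s) = bF x y s * bF (bL x y s) (-((-y) ^ s)) p := by
  have hF : ∀ n, bF x y (n + 2) = x * bF x y (n + 1) + y * bF x y n := fun _ => rfl
  have hrec : ∀ p, bF x y ((p + 2) * s) =
      bL x y s * bF x y ((p + 1) * s) + -((-y) ^ s) * bF x y (p * s) := fun p => by
    rw [show (p + 2) * s = p * s + 2 * s by ring, show (p + 1) * s = p * s + s by ring,
      bL_mul_add_eq_of_rec hF]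
    ring
  simpa using eq_mul_bF_of_rec (u := fun p => bF x y (p * s)) hrec (by simp [bF]) p

/-- F_{ps}(x,y) = F_s(x,y) · F_p(L_s(x,y), −(−y)^s). -/
theorem fib_multiple_eq_fib_of_lucas {R : Type*} [CommRing R] (x y : R)
    (s p : ℕ) (hs : 1 ≤ s) :
    bF x y (p * s) = bF x y s * bF (bL x y s) (-((-y) ^ s)) p :=
  fib_multiple_eq_fib_of_lucas_general x y s p
end
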